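/- Let X = Y ∪ Z with Y ∩ Z = ∅, where Z is a σ-compact subspace and Y is closed and discrete in X. If X is absolutely strongly star-Lindelöf and |Y| < 𝔡, then X is selectively strongly star-Menger. -/

import Mathlib

open Set Filter

variable {X : Type u}

def star {X : Type u} (A : Set X) (U : Set (Set X)) : Set X :=
  ⋃₀ {u ∈ U | (u ∩ A).Nonempty}

def IsOpenCover {X : Type u} [TopologicalSpace X] (U : Set (Set X)) : Prop :=
  (∀ u ∈ U, IsOpen u) ∧ ⋃₀ U = univ

noncomputable def domNum : Cardinal :=
  sInf {c | ∃ D : Set (ℕ → ℕ), Cardinal.mk D = c ∧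
    ∀ f : ℕ → ℕ, ∃ g ∈ D, ∀ᶠ n in atTop, f n ≤ g n}

noncomputable def boundNum : Cardinal :=
  sInf {c | ∃ B : Set (ℕ → ℕ), Cardinal.mk B = c ∧
    ¬ ∃ g : ℕ → ℕ, ∀ f ∈ B, ∀ᶠ n in atTop, f n ≤ g n}

noncomputable def covMeager : Cardinal :=
  sInf {c | ∃ F : Set (ℕ → ℕ), Cardinal.mk F = c ∧
    ¬ ∃ g : ℕ → ℕ, ∀ f ∈ F, {n | g n = f n}.Infinite}

def StronglyStarLindelof (X : Type u) [TopologicalSpace X] : Prop :=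
  ∀ U : Set (Set X), IsOpenCover U →
    ∃ C : Set X, C.Countable ∧ star C U = univ

def AbsStronglyStarLindelof (X : Type u) [TopologicalSpace X] : Prop :=
  ∀ U : Set (Set X), IsOpenCover U → ∀ D : Set X, Dense D →
    ∃ C : Set X, C ⊆ D ∧ C.Countable ∧ star C U = univ

def StronglyStarMenger (X : Type u) [TopologicalSpace X] : Prop :=
  ∀ U : ℕ → Set (Set X), (∀ n, IsOpenCover (U n)) →
    ∃ F : ℕ → Finset X, ⋃ n, star (↑(F n)) (U n) = univ

def AbsStronglyStarMenger (X : Type u) [TopologicalSpace X] : Prop :=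
  ∀ U : ℕ → Set (Set X), (∀ n, IsOpenCover (U n)) → ∀ D : Set X, Dense D →
    ∃ F : ℕ → Finset X, (∀ n, ↑(F n) ⊆ D) ∧ ⋃ n, star (↑(F n)) (U n) = univ

def SelStronglyStarMenger (X : Type u) [TopologicalSpace X] : Prop :=
  ∀ U : ℕ → Set (Set X), (∀ n, IsOpenCover (U n)) →
    ∀ D : ℕ → Set X, (∀ n, Dense (D n)) →
      ∃ F : ℕ → Finset X, (∀ n, ↑(F n) ⊆ D n) ∧ ⋃ n, star (↑(F n)) (U n) = univ

def StronglyStarHurewicz (X : Type u) [TopologicalSpace X] : Prop :=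
  ∀ U : ℕ → Set (Set X), (∀ n, IsOpenCover (U n)) →
    ∃ F : ℕ → Finset X, ∀ x : X, ∀ᶠ n in atTop, x ∈ star (↑(F n)) (U n)

def SelStronglyStarHurewicz (X : Type u) [TopologicalSpace X] : Prop :=
  ∀ U : ℕ → Set (Set X), (∀ n, IsOpenCover (U n)) →
    ∀ D : ℕ → Set X, (∀ n, Dense (D n)) →
      ∃ F : ℕ → Finset X, (∀ n, ↑(F n) ⊆ D n) ∧
        ∀ x : X, ∀ᶠ n in atTop, x ∈ star (↑(F n)) (U n)

def StronglyStarRothberger (X : Type u) [TopologicalSpace X] : Prop :=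
  ∀ U : ℕ → Set (Set X), (∀ n, IsOpenCover (U n)) →
    ∃ x : ℕ → X, ⋃ n, star {x n} (U n) = univ

def SelStronglyStarRothberger (X : Type u) [TopologicalSpace X] : Prop :=
  ∀ U : ℕ → Set (Set X), (∀ n, IsOpenCover (U n)) →
    ∀ D : ℕ → Set X, (∀ n, Dense (D n)) →
      ∃ d : ℕ → X, (∀ n, d n ∈ D n) ∧ ⋃ n, star {d n} (U n) = univ

def DiscreteIn {X : Type u} [TopologicalSpace X] (C : Set X) : Prop :=
  ∀ x ∈ C, ∃ O : Set X, IsOpen O ∧ O ∩ C = {x}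

def CountableExtent (X : Type u) [TopologicalSpace X] : Prop :=
  ∀ C : Set X, IsClosed C → DiscreteIn C → C.Countable

def SelSScdOGamma (X : Type u) [TopologicalSpace X] : Prop :=
  ∀ U : ℕ → Set (Set X), (∀ n, IsOpenCover (U n)) →
    ∀ D : ℕ → Set X, (∀ n, Dense (D n)) →
      ∃ C : ℕ → Set X, (∀ n, C n ⊆ D n ∧ IsClosed (C n) ∧ DiscreteIn (C n)) ∧
        ∀ x : X, ∀ᶠ n in atTop, x ∈ star (C n) (U n)

def SelSScdOO (X : Type u) [TopologicalSpace X] : Prop :=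
  ∀ U : ℕ → Set (Set X), (∀ n, IsOpenCover (U n)) →
    ∀ D : ℕ → Set X, (∀ n, Dense (D n)) →
      ∃ C : ℕ → Set X, (∀ n, C n ⊆ D n ∧ IsClosed (C n) ∧ DiscreteIn (C n)) ∧
        ⋃ n, star (C n) (U n) = univ

def StarSigmaK (X : Type u) [TopologicalSpace X] (K : Set (Set X)) : Prop :=
  ∀ U : Set (Set X), IsOpenCover U →
    ∃ E : ℕ → Set X, (∀ m, E m ∈ K) ∧ star (⋃ m, E m) U = univ

def AbsStarSigmaK (X : Type u) [TopologicalSpace X] (K : Set (Set X)) : Prop :=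
  ∀ D : Set X, Dense D → ∀ U : Set (Set X), IsOpenCover U →
    ∃ E : ℕ → Set X, (∀ m, E m ∈ K ∧ E m ⊆ D) ∧ star (⋃ m, E m) U = univ

def AbsNbhdStarMenger (X : Type u) [TopologicalSpace X] : Prop :=
  ∀ U : ℕ → Set (Set X), (∀ n, IsOpenCover (U n)) → ∀ D : Set X, Dense D →
    ∃ F : ℕ → Finset X, (∀ n, ↑(F n) ⊆ D) ∧
      ∀ O : ℕ → Set X, (∀ n, IsOpen (O n) ∧ ↑(F n) ⊆ O n) →
        ⋃ n, star (O n) (U n) = univ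

def AbsNbhdStarHurewicz (X : Type u) [TopologicalSpace X] : Prop :=
  ∀ U : ℕ → Set (Set X), (∀ n, IsOpenCover (U n)) → ∀ D : Set X, Dense D →
    ∃ F : ℕ → Finset X, (∀ n, ↑(F n) ⊆ D) ∧
      ∀ O : ℕ → Set X, (∀ n, IsOpen (O n) ∧ ↑(F n) ⊆ O n) →
        ∀ x : X, ∀ᶠ n in atTop, x ∈ star (O n) (U n)

/- Z is handled by compactness, one cover per compact piece. For Y, absolute strong
star-Lindelöfness gives countable C n ⊆ D n with St(C n, U n) = X; enumerating each C n,
every y ∈ Y determines the function n ↦ (index of a point of C n sharing a member of U n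
with y). Fewer than 𝔡 such functions cannot dominate, so a single g escapes all of them,
and the first g n + 1 points of each C n suffice. Interleaving the two selections covers X. -/

lemma mem_star_iff {A : Set X} {U : Set (Set X)} {x : X} :
    x ∈ star A U ↔ ∃ u ∈ U, (u ∩ A).Nonempty ∧ x ∈ u := by
  simp [_root_.star, and_assoc]

lemma star_mono {A B : Set X} (h : A ⊆ B) (U : Set (Set X)) : star A U ⊆ star B U :=
  fun _ hx =>
    let ⟨u, hu, hne, hxu⟩ := mem_star_iff.1 hx
    mem_star_iff.2 ⟨u, hu, hne.mono (inter_subset_inter_right _ h), hxu⟩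

lemma exists_not_dominated_of_mk_lt_domNum {ι : Type v} (f : ι → ℕ → ℕ)
    (h : Cardinal.mk ι < Cardinal.lift.{v} domNum) : ∃ g : ℕ → ℕ, ∀ i, ∃ n, f i n ≤ g n := by
  by_contra! hdom
  have hle : domNum ≤ Cardinal.mk (range f) :=
    csInf_le' ⟨range f, rfl, fun g => by
      obtain ⟨i, hi⟩ := hdom g
      exact ⟨f i, mem_range_self i, .of_forall fun n => (hi n).le⟩⟩
  have hrange : Cardinal.lift.{v} (Cardinal.mk (range f)) ≤ Cardinal.mk ι := by
    simpa only [Cardinal.lift_uzero] using Cardinal.mk_range_le_lift (f := f)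
  exact (Cardinal.lift_le.2 hle).trans hrange |>.not_gt h

lemma exists_finset_hit_of_mk_lt_domNum {ι : Type v} {α : ℕ → Type w} [∀ n, Countable (α n)]
    (p : ι → ∀ n, α n) (h : Cardinal.mk ι < Cardinal.lift.{v} domNum) :
    ∃ F : ∀ n, Finset (α n), ∀ i, ∃ n, p i n ∈ F n := by
  choose e he using fun n => Countable.exists_injective_nat (α n)
  obtain ⟨g, hg⟩ := exists_not_dominated_of_mk_lt_domNum (fun i n => e n (p i n)) h
  refine ⟨fun n => (Finset.range (g n + 1)).preimage (e n) (he n).injOn, fun i => ?_⟩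
  obtain ⟨n, hn⟩ := hg i
  exact ⟨n, by simpa [Nat.lt_succ_iff] using hn⟩

section

variable [TopologicalSpace X]

lemma exists_finset_subset_dense_subset_star_of_isCompact {K : Set X} (hK : IsCompact K)
    {U : Set (Set X)} (hU : IsOpenCover U) {D : Set X} (hD : Dense D) :
    ∃ F : Finset X, ↑F ⊆ D ∧ K ⊆ star (↑F) U := by
  classical
  choose u huU hxu using fun x => mem_sUnion.1 (hU.2.symm ▸ mem_univ x : x ∈ ⋃₀ U)
  choose d hdu hdD using fun x => hD.inter_open_nonempty (u x) (hU.1 _ (huU x)) ⟨x, hxu x⟩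
  obtain ⟨t, -, hKt⟩ :=
    hK.elim_nhds_subcover u fun x _ => (hU.1 _ (huU x)).mem_nhds (hxu x)
  refine ⟨t.image d, by simpa [subset_def] using fun x _ => hdD x, fun y hy => ?_⟩
  obtain ⟨x, hxt, hyx⟩ := mem_iUnion₂.1 (hKt hy)
  exact mem_star_iff.2 ⟨u x, huU x, ⟨d x, hdu x, by simpa using ⟨x, hxt, rfl⟩⟩, hyx⟩

def SelStronglyStarMengerIn (S : Set X) : Prop :=
  ∀ U : ℕ → Set (Set X), (∀ n, IsOpenCover (U n)) →
    ∀ D : ℕ → Set X, (∀ n, Dense (D n)) →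
      ∃ F : ℕ → Finset X, (∀ n, ↑(F n) ⊆ D n) ∧ S ⊆ ⋃ n, star (↑(F n)) (U n)

lemma selStronglyStarMengerIn_univ_iff :
    SelStronglyStarMengerIn (univ : Set X) ↔ SelStronglyStarMenger X := by
  simp only [SelStronglyStarMengerIn, SelStronglyStarMenger, univ_subset_iff]

lemma SelStronglyStarMengerIn.union {S T : Set X} (hS : SelStronglyStarMengerIn S)
    (hT : SelStronglyStarMengerIn T) : SelStronglyStarMengerIn (S ∪ T) := by
  intro U hU D hD
  obtain ⟨F, hFD, hSF⟩ := hS (fun n => U (2 * n)) (fun n => hU _) (fun n => D (2 * n)) fun n => hD _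
  obtain ⟨G, hGD, hTG⟩ :=
    hT (fun n => U (2 * n + 1)) (fun n => hU _) (fun n => D (2 * n + 1)) fun n => hD _
  have even_ne_odd (n : ℕ) : (2 * n + 1) % 2 ≠ 0 := by omega
  refine ⟨fun n => if n % 2 = 0 then F (n / 2) else G (n / 2), fun n => ?_, ?_⟩
  · rcases Nat.even_or_odd' n with ⟨k, rfl | rfl⟩
    · simpa using hFD k
    · simpa [even_ne_odd, Nat.mul_add_div] using hGD k
  · rintro x (hx | hx)
    · obtain ⟨k, hk⟩ := mem_iUnion.1 (hSF hx)
      exact mem_iUnion.2 ⟨2 * k, by simpa using hk⟩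
    · obtain ⟨k, hk⟩ := mem_iUnion.1 (hTG hx)
      exact mem_iUnion.2 ⟨2 * k + 1, by simpa [even_ne_odd, Nat.mul_add_div] using hk⟩

lemma selStronglyStarMengerIn_iUnion_isCompact {K : ℕ → Set X} (hK : ∀ n, IsCompact (K n)) :
    SelStronglyStarMengerIn (⋃ n, K n) := by
  intro U hU D hD
  choose F hFD hKF using fun n =>
    exists_finset_subset_dense_subset_star_of_isCompact (hK n) (hU n) (hD n)
  exact ⟨F, hFD, iUnion_mono hKF⟩

lemma AbsStronglyStarLindelof.selStronglyStarMengerIn_of_mk_lt_domNum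
    (hX : AbsStronglyStarLindelof X) {Y : Set X}
    (hY : Cardinal.mk Y < Cardinal.lift.{u} domNum) : SelStronglyStarMengerIn Y := by
  intro U hU D hD
  choose C hCD hC hCU using fun n => hX (U n) (hU n) (D n) (hD n)
  have hcount (n : ℕ) : Countable (C n) := (hC n).to_subtype
  have hmeet (y : Y) (n : ℕ) : ∃ c : C n, (y : X) ∈ star {(c : X)} (U n) := by
    obtain ⟨u, hu, ⟨c, hcu, hcC⟩, hyu⟩ := mem_star_iff.1 (hCU n ▸ mem_univ (y : X))
    exact ⟨⟨c, hcC⟩, mem_star_iff.2 ⟨u, hu, ⟨c, hcu, rfl⟩, hyu⟩⟩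
  choose p hp using hmeet
  obtain ⟨F, hF⟩ := exists_finset_hit_of_mk_lt_domNum p hY
  refine ⟨fun n => (F n).map (.subtype _), fun n => ?_, fun y hy => ?_⟩
  · simpa [subset_def] using fun x hx _ => hCD n hx
  · obtain ⟨n, hn⟩ := hF ⟨y, hy⟩
    have hpF : {(p ⟨y, hy⟩ n : X)} ⊆ ((F n).map (.subtype _) : Set X) :=
      singleton_subset_iff.2 (Finset.mem_map_of_mem _ hn)
    exact mem_iUnion.2 ⟨n, star_mono hpF _ (hp ⟨y, hy⟩ n)⟩

end

theorem stmt18_general {X : Type u} [TopologicalSpace X] (Y Z : Set X)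
    (hunion : Y ∪ Z = univ)
    (hZ : ∃ Kc : ℕ → Set X, (∀ n, IsCompact (Kc n)) ∧ Z = ⋃ n, Kc n)
    (hassl : AbsStronglyStarLindelof X) (hcard : Cardinal.mk Y < Cardinal.lift.{u} domNum) :
    SelStronglyStarMenger X := by
  obtain ⟨K, hK, rfl⟩ := hZ
  rw [← selStronglyStarMengerIn_univ_iff, ← hunion]
  exact (hassl.selStronglyStarMengerIn_of_mk_lt_domNum hcard).union
    (selStronglyStarMengerIn_iUnion_isCompact hK)

theorem stmt18 {X : Type u} [TopologicalSpace X] (Y Z : Set X)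
    (hunion : Y ∪ Z = univ) (hdisj : Y ∩ Z = ∅)
    (hZ : ∃ Kc : ℕ → Set X, (∀ n, IsCompact (Kc n)) ∧ Z = ⋃ n, Kc n)
    (hYc : IsClosed Y) (hYd : DiscreteIn Y)
    (hassl : AbsStronglyStarLindelof X) (hcard : Cardinal.mk Y < Cardinal.lift.{u} domNum) :
    SelStronglyStarMenger X :=
  stmt18_general Y Z hunion hZ hassl hcard
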